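/- Suppose 1/n ≪ ε, c ≪ γ ≪ β ≪ β₂ ≪ β₁ ≪ 1 (nested-quantifier reading). Let H be a 4-graph on n vertices with δ(H) ≥ n/2 − εn and let {A,B} be a c-even-extremal bipartition of V(H). Then: (a) at most (c/(γ³ − 2ε))·C(n,2) pairs of vertices are not γ-good; (b) at most (c/(γ⁵ − 2ε))·n vertices are not γ-good; (c) at most (c/((1−β₁)(1/2 − β₂ − 2ε)))·n vertices are (β₁,β₂)-bad; (d) if R ⊆ V(H) satisfies |R| ≤ βn/3, then for every β-medium pair p₁ there exists a γ-good pair p₂ of vertices of V(H) ∖ R, disjoint from p₁, such that p₁ ∪ p₂ is an even edge of H. -/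

import Mathlib

open Finset

namespace HamiltonTwoCycles

/-- The number of edges of `E` containing the vertex set `S` (degree/codegree of `S`). -/
def deg {n : ℕ} (E : Finset (Finset (Fin n))) (S : Finset (Fin n)) : ℕ :=
  (E.filter fun e => S ⊆ e).card

/-- `E` is the edge set of a 4-uniform hypergraph on the vertex set `Fin n`. -/
def Is4Graph {n : ℕ} (E : Finset (Finset (Fin n))) : Prop :=
  ∀ e ∈ E, e.card = 4

/-- The minimum codegree of the 4-graph `E` is at least the real number `x`. -/
def MinCodegGE {n : ℕ} (E : Finset (Finset (Fin n))) (x : ℝ) : Prop :=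
  ∀ S : Finset (Fin n), S.card = 3 → x ≤ (deg E S : ℝ)

/-- The 4-graph `E` on `Fin n` contains a Hamilton 2-cycle: a cyclic ordering
`f 0, f 1, …, f (n-1)` of all vertices such that each of the `n/2` quadruples of four
cyclically consecutive vertices starting at an even position forms an edge. -/
def HamCycle2 (n : ℕ) (E : Finset (Finset (Fin n))) : Prop :=
  Even n ∧ ∃ f : ZMod n → Fin n, Function.Bijective f ∧
    ∀ j : ℕ, j < n / 2 →
      ({f (2*j), f (2*j+1), f (2*j+2), f (2*j+3)} : Finset (Fin n)) ∈ E

/-- `f 0, f 1, …, f (2ℓ+1)` is a 2-path of length `ℓ` in the 4-graph `E`: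
the vertices are distinct and each of the `ℓ` quadruples of consecutive vertices
starting at an even position forms an edge. -/
def IsPath2 (n : ℕ) (E : Finset (Finset (Fin n))) (ℓ : ℕ) (f : ℕ → Fin n) : Prop :=
  Set.InjOn f (Set.Iio (2*ℓ+2)) ∧
  ∀ j : ℕ, j < ℓ →
    ({f (2*j), f (2*j+1), f (2*j+2), f (2*j+3)} : Finset (Fin n)) ∈ E

/-- The vertex set of the 2-path of length `ℓ` described by `f`. -/
def pathVerts (n ℓ : ℕ) (f : ℕ → Fin n) : Finset (Fin n) :=
  (Finset.range (2*ℓ+2)).image f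

/-- The unordered pair of ends `{e₁, e₂}` equals the unordered pair `{q₁, q₂}`. -/
def EndsMatch {n : ℕ} (e₁ e₂ q₁ q₂ : Finset (Fin n)) : Prop :=
  (e₁ = q₁ ∧ e₂ = q₂) ∨ (e₁ = q₂ ∧ e₂ = q₁)

/-- The 4-graph `E` contains a Hamilton 2-path whose ends are `p₁` and `p₂`. -/
def HamPath2Ends (n : ℕ) (E : Finset (Finset (Fin n))) (p₁ p₂ : Finset (Fin n)) : Prop :=
  ∃ (ℓ : ℕ) (f : ℕ → Fin n), IsPath2 n E ℓ f ∧ pathVerts n ℓ f = Finset.univ ∧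
    EndsMatch {f 0, f 1} {f (2*ℓ), f (2*ℓ+1)} p₁ p₂

/-- The total 2-pathlength of the 4-graph `E` is at least `t`: there are vertex-disjoint
2-paths in `E` whose lengths sum to at least `t`. -/
def TotalPathlengthGE (n : ℕ) (E : Finset (Finset (Fin n))) (t : ℕ) : Prop :=
  ∃ (k : ℕ) (ℓ : ℕ → ℕ) (f : ℕ → ℕ → Fin n),
    (∀ i < k, IsPath2 n E (ℓ i) (f i)) ∧
    (∀ i < k, ∀ j < k, i ≠ j →
      Disjoint (pathVerts n (ℓ i) (f i)) (pathVerts n (ℓ j) (f j))) ∧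
    t ≤ ∑ i ∈ Finset.range k, ℓ i

/-- The odd edges of `E` with respect to the bipartition `{A, Aᶜ}`. -/
def oddEdges {n : ℕ} (E : Finset (Finset (Fin n))) (A : Finset (Fin n)) :
    Finset (Finset (Fin n)) :=
  E.filter fun e => Odd (e ∩ A).card

/-- The even edges of `E` with respect to the bipartition `{A, Aᶜ}`. -/
def evenEdges {n : ℕ} (E : Finset (Finset (Fin n))) (A : Finset (Fin n)) :
    Finset (Finset (Fin n)) :=
  E.filter fun e => Even (e ∩ A).card

/-- `p` is a split pair with respect to the bipartition `{A, Aᶜ}`. -/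
def SplitPair {n : ℕ} (A p : Finset (Fin n)) : Prop :=
  p.card = 2 ∧ (p ∩ A).card = 1

/-- `p` is a connate pair with respect to the bipartition `{A, Aᶜ}`. -/
def ConnatePair {n : ℕ} (A p : Finset (Fin n)) : Prop :=
  p.card = 2 ∧ (p ∩ A).card ≠ 1

/-- The bipartition `{A, Aᶜ}` of the vertex set of the 4-graph `E` is even-good. -/
def EvenGood (n : ℕ) (E : Finset (Finset (Fin n))) (A : Finset (Fin n)) : Prop :=
  (Even A.card ∨ A.card = Aᶜ.card) ∨
  (∃ e ∈ oddEdges E A, ∃ e' ∈ oddEdges E A,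
      e ∩ e' = ∅ ∨ SplitPair A (e ∩ e')) ∨
  (A.card = Aᶜ.card + 2 ∧ ∃ e ∈ oddEdges E A, ∃ e' ∈ oddEdges E A,
      (e ∩ e').card = 2 ∧ e ∩ e' ⊆ A) ∨
  (Aᶜ.card = A.card + 2 ∧ ∃ e ∈ oddEdges E A, ∃ e' ∈ oddEdges E A,
      (e ∩ e').card = 2 ∧ e ∩ e' ⊆ Aᶜ)

/-- The bipartition `{A, Aᶜ}` of the vertex set of the 4-graph `E` is odd-good. -/
def OddGood (n : ℕ) (E : Finset (Finset (Fin n))) (A : Finset (Fin n)) : Prop :=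
  ∃ m d : ℕ, (m = 0 ∨ m = 2 ∨ m = 4 ∨ m = 6) ∧ (d = 0 ∨ d = 2) ∧
    m % 8 = n % 8 ∧
    (d : ℤ) % 4 = ((A.card : ℤ) - (Aᶜ.card : ℤ)) % 4 ∧
    (((m = 0 ∧ d = 0) ∨ (m = 4 ∧ d = 2)) ∨
     (((m = 2 ∧ d = 2) ∨ (m = 6 ∧ d = 0)) ∧ (evenEdges E A).Nonempty) ∨
     (((m = 4 ∧ d = 0) ∨ (m = 0 ∧ d = 2)) ∧ TotalPathlengthGE n (evenEdges E A) 2) ∨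
     (((m = 6 ∧ d = 2) ∨ (m = 2 ∧ d = 0)) ∧
       ((∃ e ∈ evenEdges E A, (e ∩ A).card = 2 ∧ (e ∩ Aᶜ).card = 2) ∨
        TotalPathlengthGE n (evenEdges E A) 3)))

/-- The bipartition `{A, Aᶜ}` is `c`-even-extremal. -/
def EvenExtremalBip (n : ℕ) (E : Finset (Finset (Fin n))) (c : ℝ)
    (A : Finset (Fin n)) : Prop :=
  (n : ℝ)/2 - c*n ≤ (A.card : ℝ) ∧ (A.card : ℝ) ≤ (n : ℝ)/2 + c*n ∧
  ((oddEdges E A).card : ℝ) ≤ c * (n.choose 4 : ℝ)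

/-- The 4-graph `E` is `c`-even-extremal. -/
def EvenExtremal (n : ℕ) (E : Finset (Finset (Fin n))) (c : ℝ) : Prop :=
  ∃ A : Finset (Fin n), EvenExtremalBip n E c A

/-- The bipartition `{A, Aᶜ}` is `c`-odd-extremal. -/
def OddExtremalBip (n : ℕ) (E : Finset (Finset (Fin n))) (c : ℝ)
    (A : Finset (Fin n)) : Prop :=
  (n : ℝ)/2 - c*n ≤ (A.card : ℝ) ∧ (A.card : ℝ) ≤ (n : ℝ)/2 + c*n ∧
  ((evenEdges E A).card : ℝ) ≤ c * (n.choose 4 : ℝ)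

/-- The 4-graph `E` is `c`-odd-extremal. -/
def OddExtremal (n : ℕ) (E : Finset (Finset (Fin n))) (c : ℝ) : Prop :=
  ∃ A : Finset (Fin n), OddExtremalBip n E c A

/-- The number of (vertex-sequence) 2-paths of length `ℓ` in `E` whose ends are the
pairs `p₁` and `p₂`. -/
noncomputable def pathCount (n : ℕ) (E : Finset (Finset (Fin n))) (ℓ : ℕ)
    (p₁ p₂ : Finset (Fin n)) : ℕ :=
  Nat.card {f : Fin (2*ℓ+2) → Fin n //
    IsPath2 n E ℓ (fun i => f ⟨i % (2*ℓ+2), Nat.mod_lt i (by omega)⟩) ∧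
    EndsMatch {f ⟨0, by omega⟩, f ⟨1, by omega⟩}
      {f ⟨2*ℓ, by omega⟩, f ⟨2*ℓ+1, by omega⟩} p₁ p₂}

/-- The 4-graph `E` on `n` vertices is `κ`-connecting. -/
def Connecting (n : ℕ) (E : Finset (Finset (Fin n))) (κ : ℝ) : Prop :=
  ∀ p₁ p₂ : Finset (Fin n), p₁.card = 2 → p₂.card = 2 → Disjoint p₁ p₂ →
    κ * (n : ℝ)^2 ≤ (pathCount n E 2 p₁ p₂ : ℝ) ∨
    κ * (n : ℝ)^4 ≤ (pathCount n E 3 p₁ p₂ : ℝ)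

/-- The ordered octuple `O` is an absorbing structure for the pair `p` in the 4-graph `E`. -/
def AbsorbStruct (n : ℕ) (E : Finset (Finset (Fin n))) (p : Finset (Fin n))
    (O : Fin 8 → Fin n) : Prop :=
  Function.Injective O ∧
  (∃ f : ℕ → Fin n, IsPath2 n E 3 f ∧
      pathVerts n 3 f = Finset.univ.image O ∧
      EndsMatch {f 0, f 1} {f 6, f 7} {O 0, O 1} {O 6, O 7}) ∧
  (∃ f : ℕ → Fin n, IsPath2 n E 4 f ∧
      pathVerts n 4 f = Finset.univ.image O ∪ p ∧
      EndsMatch {f 0, f 1} {f 8, f 9} {O 0, O 1} {O 6, O 7})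

/-- The pair `p` is `β`-absorbable in the 4-graph `E`. -/
def Absorbable (n : ℕ) (E : Finset (Finset (Fin n))) (β : ℝ) (p : Finset (Fin n)) : Prop :=
  β * (n : ℝ)^8 ≤ (Nat.card {O : Fin 8 → Fin n // AbsorbStruct n E p O} : ℝ)

/-- The 4-graph `E` is `(α,β)`-absorbing. -/
def Absorbing (n : ℕ) (E : Finset (Finset (Fin n))) (α β : ℝ) : Prop :=
  (Nat.card {p : Finset (Fin n) // p.card = 2 ∧ ¬ Absorbable n E β p} : ℝ) ≤ α * (n : ℝ)^2

/-- `g 0, …, g (m-1)` is a 2-cycle on `m` vertices in the 4-graph `E`. -/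
def IsCycle2 (n : ℕ) (E : Finset (Finset (Fin n))) (m : ℕ) (g : ℕ → Fin n) : Prop :=
  4 ≤ m ∧ Even m ∧ Set.InjOn g (Set.Iio m) ∧
  ∀ j : ℕ, j < m / 2 →
    ({g ((2*j) % m), g ((2*j+1) % m), g ((2*j+2) % m), g ((2*j+3) % m)} :
      Finset (Fin n)) ∈ E

/-- The vertex set of the 2-cycle on `m` vertices described by `g`. -/
def cycVerts (n m : ℕ) (g : ℕ → Fin n) : Finset (Fin n) :=
  (Finset.range m).image g

/-- The 2-path `f` (of length `ℓ`) is a segment of the 2-cycle `g` (on `m` vertices). -/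
def IsSegment (n m : ℕ) (g : ℕ → Fin n) (ℓ : ℕ) (f : ℕ → Fin n) : Prop :=
  2*ℓ+2 ≤ m ∧ ∃ t : ℕ, Even t ∧ ∀ i < 2*ℓ+2, f i = g ((t + i) % m)

/-- The 2-graph `G` contains a perfect matching on the vertex set `S`. -/
def PerfectMatchingOn (n : ℕ) (G : Finset (Finset (Fin n))) (S : Finset (Fin n)) : Prop :=
  ∃ M ⊆ G, (∀ p ∈ M, ∀ q ∈ M, p ≠ q → Disjoint p q) ∧ M.biUnion id = S

/-- `v` is a `β`-fine vertex of the 4-graph `E` on `n` vertices. -/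
def FineVertex (n : ℕ) (E : Finset (Finset (Fin n))) (β : ℝ) (v : Fin n) : Prop :=
  (1 - β^3) * (n.choose 3 : ℝ) ≤ (deg E {v} : ℝ)

/-- `p` is a `β`-fine pair of the 4-graph `E` on `n` vertices. -/
def FinePair (n : ℕ) (E : Finset (Finset (Fin n))) (β : ℝ) (p : Finset (Fin n)) : Prop :=
  p.card = 2 ∧ (1 - β^2) * (n.choose 2 : ℝ) ≤ (deg E p : ℝ)

/-- `S` is a `β`-fine triple of the 4-graph `E` on `n` vertices. -/
def FineTriple (n : ℕ) (E : Finset (Finset (Fin n))) (β : ℝ) (S : Finset (Fin n)) : Prop :=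
  S.card = 3 ∧ (1 - β) * (n : ℝ) ≤ (deg E S : ℝ)

/-- `v` is a `γ`-good vertex with respect to the edge collection `F` (e.g. the even or
the odd edges of a 4-graph on `n` vertices). -/
def GoodVertexFor (n : ℕ) (F : Finset (Finset (Fin n))) (γ : ℝ) (v : Fin n) : Prop :=
  (1/2 - γ^5) * (n.choose 3 : ℝ) ≤ (deg F {v} : ℝ)

/-- `p` is a `γ`-good pair with respect to the edge collection `F`. -/
def GoodPairFor (n : ℕ) (F : Finset (Finset (Fin n))) (γ : ℝ) (p : Finset (Fin n)) : Prop :=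
  p.card = 2 ∧ (1/2 - γ^3) * (n.choose 2 : ℝ) ≤ (deg F p : ℝ)

/-- `S` is a `γ`-good triple with respect to the edge collection `F`. -/
def GoodTripleFor (n : ℕ) (F : Finset (Finset (Fin n))) (γ : ℝ) (S : Finset (Fin n)) : Prop :=
  S.card = 3 ∧ (1/2 - γ) * (n : ℝ) ≤ (deg F S : ℝ)

/-- `p` is a `β₂`-medium pair with respect to the edge collection `F`. -/
def MediumPairFor (n : ℕ) (F : Finset (Finset (Fin n))) (β₂ : ℝ) (p : Finset (Fin n)) : Prop :=
  p.card = 2 ∧ β₂ * (n.choose 2 : ℝ) ≤ (deg F p : ℝ)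

/-- `v` is a `(β₁,β₂)`-medium vertex w.r.t. the even edges of `(E, A)`:
it lies in at least `β₁ n` pairs that are `β₂`-medium (for the even edges). -/
def MediumVertexE (n : ℕ) (E : Finset (Finset (Fin n))) (A : Finset (Fin n))
    (β₁ β₂ : ℝ) (v : Fin n) : Prop :=
  β₁ * (n : ℝ) ≤
    (Nat.card {p : Finset (Fin n) // v ∈ p ∧ MediumPairFor n (evenEdges E A) β₂ p} : ℝ)

/-- `v` is a `(β₁,β₂)`-medium vertex w.r.t. the odd edges of `(E, A)`:
at least `β₁ n` vertices of `A` and at least `β₁ n` vertices of `Aᶜ` form a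
`β₂`-medium pair with `v` (for the odd edges). -/
def MediumVertexO (n : ℕ) (E : Finset (Finset (Fin n))) (A : Finset (Fin n))
    (β₁ β₂ : ℝ) (v : Fin n) : Prop :=
  β₁ * (n : ℝ) ≤
    (Nat.card {a : Fin n // a ∈ A ∧ MediumPairFor n (oddEdges E A) β₂ {v, a}} : ℝ) ∧
  β₁ * (n : ℝ) ≤
    (Nat.card {b : Fin n // b ∈ Aᶜ ∧ MediumPairFor n (oddEdges E A) β₂ {v, b}} : ℝ)


end HamiltonTwoCycles

open HamiltonTwoCycles

/-!
Because every triple lies in at least `n/2 - εn` edges, every pair and every vertex lies in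
nearly half of all 4-sets through it. A pair or vertex that fails to be `γ`-good, or a
`(β₁,β₂)`-bad vertex, therefore lies in many odd edges, and double counting the at most
`c·C(n,4)` odd edges through pairs and vertices bounds the number of such. For (d), a `β`-medium
pair `p₁` lies in at least `β·C(n,2)` even edges `p₁ ∪ q`; at most `β/6·C(n,2)` of the pairs `q`
are not `γ`-good and at most `|R|·n` of them meet `R`, so some `q` remains.
-/

namespace HamiltonTwoCycles

lemma cast_choose_succ_mul (n k : ℕ) :
    (n.choose (k + 1) : ℝ) * (k + 1) = n.choose k * (n - k) := by
  rcases le_or_gt k n with hk | hk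
  · have h := congrArg (Nat.cast (R := ℝ)) (Nat.choose_succ_right_eq n k)
    push_cast [Nat.cast_sub hk] at h
    exact h
  · simp [Nat.choose_eq_zero_of_lt hk, Nat.choose_eq_zero_of_lt (hk.trans (Nat.lt_succ_self k))]

lemma cast_choose_three (n : ℕ) : (n.choose 3 : ℝ) = n * (n - 1) * (n - 2) / 6 := by
  have h := cast_choose_succ_mul n 2
  rw [Nat.cast_choose_two] at h
  push_cast at h
  linarith

lemma cast_choose_four (n : ℕ) :
    (n.choose 4 : ℝ) = n * (n - 1) * (n - 2) * (n - 3) / 24 := by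
  have h := cast_choose_succ_mul n 3
  rw [cast_choose_three] at h
  push_cast at h
  linarith

lemma card_filter_mul_le_sum {ι : Type*} (s : Finset ι) (P : ι → Prop) [DecidablePred P]
    {f : ι → ℝ} {t : ℝ} (hf : ∀ x ∈ s, 0 ≤ f x) (hP : ∀ x ∈ s, P x → t ≤ f x) :
    #{x ∈ s | P x} * t ≤ ∑ x ∈ s, f x :=
  calc #{x ∈ s | P x} * t ≤ ∑ x ∈ s with P x, f x := by
        simpa using card_nsmul_le_sum _ _ t fun x hx => hP x (mem_filter.1 hx).1 (mem_filter.1 hx).2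
    _ ≤ ∑ x ∈ s, f x := sum_le_sum_of_subset_of_nonneg (filter_subset _ _) fun x hx _ => hf x hx

lemma card_filter_le_div_mul_of_sum_le {ι : Type*} (s : Finset ι) (P : ι → Prop)
    [DecidablePred P] {f : ι → ℝ} {t d c m : ℝ} (ht : 0 < t) (hd : 0 < d)
    (hf : ∀ x ∈ s, 0 ≤ f x) (hP : ∀ x ∈ s, P x → t * d ≤ f x) (hsum : ∑ x ∈ s, f x ≤ c * m * d) :
    (#{x ∈ s | P x} : ℝ) ≤ c / t * m := by
  have h := (card_filter_mul_le_sum s P hf hP).trans hsum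
  rw [div_mul_eq_mul_div, le_div_iff₀ ht]
  exact le_of_mul_le_mul_right (by linarith) hd

variable {n : ℕ}

section Degrees

variable {r : ℕ} {F : Finset (Finset (Fin n))}

lemma deg_evenEdges_add_deg_oddEdges (E : Finset (Finset (Fin n))) (A S : Finset (Fin n)) :
    deg (evenEdges E A) S + deg (oddEdges E A) S = deg E S := by
  simp only [deg, evenEdges, oddEdges, filter_filter, ← Nat.not_even_iff_odd]
  rw [← card_filter_add_card_filter_not (s := E.filter (S ⊆ ·)) (fun e => Even (e ∩ A).card),
    filter_filter, filter_filter]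
  congr 2 <;> ext e <;> simp only [mem_filter] <;> tauto

lemma sum_deg_insert (hF : ∀ e ∈ F, e.card = r) (S : Finset (Fin n)) :
    ∑ v ∈ Sᶜ, deg F (insert v S) = (r - S.card) * deg F S := by
  calc ∑ v ∈ Sᶜ, deg F (insert v S)
      = ∑ e ∈ F, #{v ∈ Sᶜ | insert v S ⊆ e} :=
        sum_card_bipartiteAbove_eq_sum_card_bipartiteBelow _
    _ = ∑ e ∈ F with S ⊆ e, (r - S.card) := by
        rw [sum_filter]
        refine sum_congr rfl fun e he => ?_
        split_ifs with hSe
        · rw [← hF e he, ← card_sdiff_of_subset hSe]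
          congr 1
          ext v
          simp only [mem_filter, mem_compl, mem_sdiff, insert_subset_iff]
          tauto
        · rw [card_eq_zero, filter_eq_empty_iff]
          exact fun v _ h => hSe ((subset_insert v S).trans h)
    _ = (r - S.card) * deg F S := by rw [sum_const, smul_eq_mul, mul_comm, deg]

lemma sum_deg_powersetCard (hF : ∀ e ∈ F, e.card = r) (k : ℕ) :
    ∑ S ∈ powersetCard k univ, deg F S = r.choose k * F.card := by
  calc ∑ S ∈ powersetCard k univ, deg F S
      = ∑ e ∈ F, #{S ∈ powersetCard k univ | S ⊆ e} :=
        sum_card_bipartiteAbove_eq_sum_card_bipartiteBelow _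
    _ = ∑ _e ∈ F, r.choose k := by
        refine sum_congr rfl fun e he => ?_
        rw [← hF e he, ← card_powersetCard]
        congr 1
        ext S
        simp only [mem_filter, mem_powersetCard, subset_univ, true_and]
        tauto
    _ = r.choose k * F.card := by rw [sum_const, smul_eq_mul, mul_comm]

lemma sum_deg_singleton (hF : ∀ e ∈ F, e.card = r) :
    ∑ v, deg F {v} = r * F.card := by
  simpa [powersetCard_one] using sum_deg_powersetCard hF 1

lemma mul_le_deg_of_le_deg_insert (hF : ∀ e ∈ F, e.card = r) {x : ℝ} {S : Finset (Fin n)}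
    (hx : ∀ v ∉ S, x ≤ deg F (insert v S)) :
    (n - S.card) * x ≤ ((r - S.card : ℕ) : ℝ) * deg F S := by
  have hcard : ((Sᶜ.card : ℕ) : ℝ) = n - S.card := by
    rw [card_compl, Fintype.card_fin, Nat.cast_sub ((card_le_univ S).trans_eq (card_fin n))]
  have := card_nsmul_le_sum Sᶜ (fun v => (deg F (insert v S) : ℝ)) x
    (fun v hv => hx v (mem_compl.1 hv))
  rw [nsmul_eq_mul, hcard, ← Nat.cast_sum, sum_deg_insert hF] at this
  exact_mod_cast this

end Degrees

lemma card_pairs_mem_le (x : Fin n) :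
    #{q : Finset (Fin n) | q.card = 2 ∧ x ∈ q} ≤ n := by
  calc #{q : Finset (Fin n) | q.card = 2 ∧ x ∈ q}
      ≤ #(univ.image fun y => ({x, y} : Finset (Fin n))) := by
        refine card_le_card fun q hq => ?_
        obtain ⟨hq2, hxq⟩ := (mem_filter.1 hq).2
        obtain ⟨y, hy⟩ := card_eq_one.1 (by rw [card_erase_of_mem hxq, hq2] : (q.erase x).card = 1)
        exact mem_image.2 ⟨y, mem_univ y, by rw [← hy, insert_erase hxq]⟩
    _ ≤ n := card_image_le.trans_eq (card_fin n)

lemma card_pairs_not_disjoint_le (R : Finset (Fin n)) :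
    #{q : Finset (Fin n) | q.card = 2 ∧ ¬Disjoint q R} ≤ R.card * n := by
  calc #{q : Finset (Fin n) | q.card = 2 ∧ ¬Disjoint q R}
      ≤ #(R.biUnion fun x => {q : Finset (Fin n) | q.card = 2 ∧ x ∈ q}) := by
        refine card_le_card fun q hq => ?_
        obtain ⟨hq2, hqR⟩ := (mem_filter.1 hq).2
        obtain ⟨x, hxq, hxR⟩ := not_disjoint_iff.1 hqR
        exact mem_biUnion.2 ⟨x, hxR, mem_filter.2 ⟨mem_univ q, hq2, hxq⟩⟩
    _ ≤ ∑ x ∈ R, #{q : Finset (Fin n) | q.card = 2 ∧ x ∈ q} := card_biUnion_le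
    _ ≤ R.card * n := by simpa using sum_le_card_nsmul R _ n fun x _ => card_pairs_mem_le x

lemma card_filter_pair_le_natCard (v : Fin n) (Q : Finset (Fin n) → Prop) [DecidablePred Q] :
    #{u ∈ {v}ᶜ | Q {u, v}} ≤ Nat.card {p : Finset (Fin n) // v ∈ p ∧ Q p} := by
  rw [Nat.card_eq_fintype_card, Fintype.card_subtype]
  refine card_le_card_of_injOn (fun u => {u, v}) (fun u hu => ?_) fun u hu u' _ huu' => ?_
  · exact mem_filter.2 ⟨mem_univ _, mem_insert_of_mem (mem_singleton_self v), (mem_filter.1 hu).2⟩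
  · exact (insert_inj (by simpa using (mem_filter.1 (mem_coe.1 hu)).1)).1 huu'

lemma exists_pair_union_mem_of_lt_deg {F : Finset (Finset (Fin n))}
    (hF : Is4Graph F) {p : Finset (Fin n)} (hp : p.card = 2)
    (B : Finset (Finset (Fin n))) (R : Finset (Fin n))
    (h : B.card + R.card * n < deg F p) :
    ∃ q, q.card = 2 ∧ q ∉ B ∧ Disjoint q R ∧ Disjoint q p ∧ p ∪ q ∈ F := by
  by_contra! hne
  have hmaps : ∀ e ∈ {e ∈ F | p ⊆ e},
      e \ p ∈ B ∪ ({q | q.card = 2 ∧ ¬Disjoint q R} : Finset (Finset (Fin n))) := by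
    intro e he
    obtain ⟨heF, hpe⟩ := mem_filter.1 he
    have hq2 : (e \ p).card = 2 := by rw [card_sdiff_of_subset hpe, hF e heF, hp]
    by_contra hq
    simp only [mem_union, mem_filter, not_or, not_and, not_not] at hq
    exact hne _ hq2 hq.1 (hq.2 (mem_univ _) hq2) sdiff_disjoint (by rwa [union_sdiff_of_subset hpe])
  have hinj : Set.InjOn (· \ p) ({e ∈ F | p ⊆ e} : Finset _) := by
    intro e he e' he' hee'
    rw [← union_sdiff_of_subset (mem_filter.1 (mem_coe.1 he)).2,
      ← union_sdiff_of_subset (mem_filter.1 (mem_coe.1 he')).2]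
    exact congrArg (p ∪ ·) hee'
  have := (card_le_card_of_injOn _ hmaps hinj).trans (card_union_le _ _)
  have := card_pairs_not_disjoint_le R
  simp only [deg] at h
  omega

section EvenExtremal

variable {E : Finset (Finset (Fin n))} {A : Finset (Fin n)} {ε c : ℝ}

lemma Is4Graph.evenEdges (h4 : Is4Graph E) : Is4Graph (evenEdges E A) :=
  fun e he => h4 e (mem_filter.1 he).1

lemma Is4Graph.oddEdges (h4 : Is4Graph E) : Is4Graph (oddEdges E A) :=
  fun e he => h4 e (mem_filter.1 he).1

lemma deg_pair_ge (h4 : Is4Graph E) (hδ : MinCodegGE E (n / 2 - ε * n)) (hεn : 1 / 2 ≤ ε * n)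
    {p : Finset (Fin n)} (hp : p.card = 2) : (1 / 2 - 2 * ε) * n.choose 2 ≤ deg E p := by
  have h := mul_le_deg_of_le_deg_insert h4 (S := p) fun v hv =>
    hδ _ (by rw [card_insert_of_notMem hv, hp])
  rw [hp] at h
  rw [Nat.cast_choose_two]
  norm_num at h
  -- `εn ≥ 1/2` absorbs the loss from `n - 2` neighbours instead of `n - 1`.
  nlinarith [mul_nonneg n.cast_nonneg (sub_nonneg.2 hεn)]

lemma deg_singleton_ge (h4 : Is4Graph E) {x : ℝ} (hx : 0 ≤ x)
    (hpair : ∀ p : Finset (Fin n), p.card = 2 → x * n.choose 2 ≤ deg E p) (v : Fin n) :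
    x * n.choose 3 ≤ deg E {v} := by
  have h := mul_le_deg_of_le_deg_insert h4 (S := {v}) fun u hu =>
    hpair _ (card_pair (by simpa using hu))
  have hn : 0 ≤ (n : ℝ) * (n - 1) := by
    rcases Nat.eq_zero_or_pos n with rfl | hpos
    · simp
    · exact mul_nonneg n.cast_nonneg (sub_nonneg.2 (by exact_mod_cast hpos))
  rw [card_singleton, Nat.cast_choose_two] at h
  rw [cast_choose_three]
  norm_num at h
  nlinarith [mul_nonneg hx hn]

lemma deg_oddEdges_ge_of_deg_evenEdges_lt {S : Finset (Fin n)} {x y : ℝ} (hE : x ≤ deg E S)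
    (hev : (deg (evenEdges E A) S : ℝ) < y) : x - y ≤ deg (oddEdges E A) S := by
  have : (deg (evenEdges E A) S : ℝ) + deg (oddEdges E A) S = deg E S := by
    exact_mod_cast deg_evenEdges_add_deg_oddEdges E A S
  linarith

lemma natCard_not_goodPair_le (h4 : Is4Graph E)
    (hpair : ∀ p : Finset (Fin n), p.card = 2 → (1 / 2 - 2 * ε) * n.choose 2 ≤ deg E p)
    (hodd : ((oddEdges E A).card : ℝ) ≤ c * n.choose 4) (hc : 0 ≤ c) (hn : 2 ≤ n) {γ : ℝ}
    (hγ : 2 * ε < γ ^ 3) :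
    (Nat.card {p : Finset (Fin n) // p.card = 2 ∧ ¬GoodPairFor n (evenEdges E A) γ p} : ℝ) ≤
      c / (γ ^ 3 - 2 * ε) * n.choose 2 := by
  classical
  have hcount : #{p : Finset (Fin n) | p.card = 2 ∧ ¬GoodPairFor n (evenEdges E A) γ p} =
      #{p ∈ powersetCard 2 univ | ¬GoodPairFor n (evenEdges E A) γ p} := by
    congr 1
    ext p
    simp [mem_powersetCard]
  rw [Nat.card_eq_fintype_card, Fintype.card_subtype, hcount]
  refine card_filter_le_div_mul_of_sum_le _ _ (sub_pos.2 hγ)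
    (Nat.cast_pos.2 (Nat.choose_pos hn)) (f := fun p => (deg (oddEdges E A) p : ℝ))
    (fun _ _ => Nat.cast_nonneg _) (fun p hp hbad => ?_) ?_
  · have hp2 := (mem_powersetCard.1 hp).2
    simp only [GoodPairFor, hp2, true_and, not_le] at hbad
    linarith [deg_oddEdges_ge_of_deg_evenEdges_lt (hpair p hp2) hbad]
  · have h6 : 6 * n.choose 4 ≤ n.choose 2 * n.choose 2 :=
      calc 6 * n.choose 4 = n.choose 2 * (n - 2).choose 2 := by
            rw [← Nat.choose_mul (by norm_num : 2 ≤ 4), mul_comm]; rfl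
        _ ≤ n.choose 2 * n.choose 2 :=
            Nat.mul_le_mul_left _ (Nat.choose_le_choose 2 (Nat.sub_le n _))
    have h6' : (6 * n.choose 4 : ℝ) ≤ n.choose 2 * n.choose 2 := by exact_mod_cast h6
    rw [← Nat.cast_sum, sum_deg_powersetCard h4.oddEdges 2, show (4 : ℕ).choose 2 = 6 from rfl]
    push_cast
    nlinarith [mul_le_mul_of_nonneg_left h6' hc]

lemma natCard_not_goodVertex_le (h4 : Is4Graph E)
    (hvert : ∀ v : Fin n, (1 / 2 - 2 * ε) * n.choose 3 ≤ deg E {v})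
    (hodd : ((oddEdges E A).card : ℝ) ≤ c * n.choose 4) (hc : 0 ≤ c) (hn : 3 ≤ n) {γ : ℝ}
    (hγ : 2 * ε < γ ^ 5) :
    (Nat.card {v : Fin n // ¬GoodVertexFor n (evenEdges E A) γ v} : ℝ) ≤
      c / (γ ^ 5 - 2 * ε) * n := by
  classical
  rw [Nat.card_eq_fintype_card, Fintype.card_subtype]
  refine card_filter_le_div_mul_of_sum_le _ _ (sub_pos.2 hγ)
    (Nat.cast_pos.2 (Nat.choose_pos hn)) (f := fun v => (deg (oddEdges E A) {v} : ℝ))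
    (fun _ _ => Nat.cast_nonneg _) (fun v _ hbad => ?_) ?_
  · simp only [GoodVertexFor, not_le] at hbad
    linarith [deg_oddEdges_ge_of_deg_evenEdges_lt (hvert v) hbad]
  · have h4C4 : 4 * n.choose 4 ≤ n * n.choose 3 :=
      calc 4 * n.choose 4 = n.choose 3 * (n - 3) := by
            rw [← Nat.choose_one_right (n - 3), ← Nat.choose_mul (by norm_num : 3 ≤ 4), mul_comm]
            rfl
        _ ≤ n * n.choose 3 := by rw [mul_comm]; exact Nat.mul_le_mul_right _ (Nat.sub_le n _)
    have h4C4' : (4 * n.choose 4 : ℝ) ≤ n * n.choose 3 := by exact_mod_cast h4C4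
    rw [← Nat.cast_sum, sum_deg_singleton h4.oddEdges]
    push_cast
    nlinarith [mul_le_mul_of_nonneg_left h4C4' hc]

lemma deg_oddEdges_singleton_ge_of_not_mediumVertex (h4 : Is4Graph E)
    (hpair : ∀ p : Finset (Fin n), p.card = 2 → (1 / 2 - 2 * ε) * n.choose 2 ≤ deg E p)
    {β₁ β₂ : ℝ} (hβ₁ : β₁ ≤ 1 / 2) (hD : 0 ≤ 1 / 2 - β₂ - 2 * ε) (hn : 2 ≤ n) {v : Fin n}
    (hv : ¬MediumVertexE n E A β₁ β₂ v) :
    (1 - β₁) * (1 / 2 - β₂ - 2 * ε) * ((n - 1) * (n - 2) * (n - 3) / 6) ≤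
      deg (oddEdges E A) {v} := by
  classical
  set P : Fin n → Prop := fun u => MediumPairFor n (evenEdges E A) β₂ {u, v}
  have hmed : (#{u ∈ {v}ᶜ | P u} : ℝ) < β₁ * n :=
    (Nat.cast_le.2 (card_filter_pair_le_natCard v _)).trans_lt (not_le.1 hv)
  have hsplit : (#{u ∈ {v}ᶜ | P u} : ℝ) + #{u ∈ {v}ᶜ | ¬P u} = n - 1 := by
    rw [← Nat.cast_add, card_filter_add_card_filter_not, card_compl, card_singleton,
      Fintype.card_fin, Nat.cast_sub (by omega), Nat.cast_one]
  have hlow : (#{u ∈ {v}ᶜ | ¬P u} : ℝ) * ((1 / 2 - β₂ - 2 * ε) * n.choose 2) ≤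
      3 * deg (oddEdges E A) {v} := by
    have h := card_filter_mul_le_sum {v}ᶜ (¬P ·)
      (f := fun u => (deg (oddEdges E A) {u, v} : ℝ)) (t := (1 / 2 - β₂ - 2 * ε) * n.choose 2)
      (fun _ _ => Nat.cast_nonneg _)
      fun u hu hnP => by
        have hu2 : ({u, v} : Finset (Fin n)).card = 2 := card_pair (by simpa using hu)
        simp only [P, MediumPairFor, hu2, true_and, not_le] at hnP
        linarith [deg_oddEdges_ge_of_deg_evenEdges_lt (hpair _ hu2) hnP]
    rw [← Nat.cast_sum, sum_deg_insert h4.oddEdges, card_singleton] at h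
    push_cast at h
    norm_num at h
    exact h
  rw [Nat.cast_choose_two] at hlow
  have hn' : (2 : ℝ) ≤ n := by exact_mod_cast hn
  have hK : 0 ≤ (1 / 2 - β₂ - 2 * ε) * (n * (n - 1) / 2) := by
    apply mul_nonneg hD; apply div_nonneg _ zero_le_two; nlinarith
  have h1 := mul_le_mul_of_nonneg_right (by linarith : (n - 1 - β₁ * n : ℝ) ≤ #{u ∈ {v}ᶜ | ¬P u}) hK
  have hbr : 0 ≤ (n - 1 - β₁ * n) * n - (1 - β₁) * ((n - 2) * (n - 3)) := by nlinarith
  have h2 := mul_nonneg (mul_nonneg hD (by linarith : (0 : ℝ) ≤ (n - 1) / 2)) hbr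
  nlinarith

lemma natCard_not_mediumVertex_le (h4 : Is4Graph E)
    (hpair : ∀ p : Finset (Fin n), p.card = 2 → (1 / 2 - 2 * ε) * n.choose 2 ≤ deg E p)
    (hodd : ((oddEdges E A).card : ℝ) ≤ c * n.choose 4) {β₁ β₂ : ℝ} (hβ₁ : β₁ ≤ 1 / 2)
    (hD : 0 < 1 / 2 - β₂ - 2 * ε) (hn : 4 ≤ n) :
    (Nat.card {v : Fin n // ¬MediumVertexE n E A β₁ β₂ v} : ℝ) ≤
      c / ((1 - β₁) * (1 / 2 - β₂ - 2 * ε)) * n := by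
  classical
  have hn' : (4 : ℝ) ≤ n := by exact_mod_cast hn
  have hT : (0 : ℝ) < (n - 1) * (n - 2) * (n - 3) / 6 := by
    apply div_pos _ (by norm_num)
    exact mul_pos (mul_pos (by linarith) (by linarith)) (by linarith)
  rw [Nat.card_eq_fintype_card, Fintype.card_subtype]
  refine card_filter_le_div_mul_of_sum_le _ _ (mul_pos (by linarith) hD) hT
    (f := fun v => (deg (oddEdges E A) {v} : ℝ)) (fun _ _ => Nat.cast_nonneg _)
    (fun v _ hv => deg_oddEdges_singleton_ge_of_not_mediumVertex h4 hpair hβ₁ hD.le (by omega) hv)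
    ?_
  rw [← Nat.cast_sum, sum_deg_singleton h4.oddEdges]
  rw [cast_choose_four] at hodd
  push_cast
  linarith

lemma exists_goodPair_union_mem_evenEdges (h4 : Is4Graph E) {β γ : ℝ} (hβ : 0 < β)
    (hn : 6 ≤ n)
    (hbad : (Nat.card {p : Finset (Fin n) // p.card = 2 ∧ ¬GoodPairFor n (evenEdges E A) γ p} : ℝ)
      ≤ β / 6 * n.choose 2)
    (R : Finset (Fin n)) (hR : (R.card : ℝ) ≤ β * n / 3) {p₁ : Finset (Fin n)}
    (hp₁ : MediumPairFor n (evenEdges E A) β p₁) :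
    ∃ p₂, GoodPairFor n (evenEdges E A) γ p₂ ∧ Disjoint p₂ R ∧ Disjoint p₂ p₁ ∧
      p₁ ∪ p₂ ∈ evenEdges E A := by
  classical
  set B : Finset (Finset (Fin n)) := {p | p.card = 2 ∧ ¬GoodPairFor n (evenEdges E A) γ p}
  have hB : (B.card : ℝ) ≤ β / 6 * (n * (n - 1) / 2) := by
    rw [← Nat.cast_choose_two]
    refine le_of_eq_of_le ?_ hbad
    rw [Nat.card_eq_fintype_card, Fintype.card_subtype]
  have hn' : (6 : ℝ) ≤ n := by exact_mod_cast hn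
  have hRn : (R.card : ℝ) * n ≤ β * n / 3 * n := mul_le_mul_of_nonneg_right hR n.cast_nonneg
  have hdeg := hp₁.2
  rw [Nat.cast_choose_two] at hdeg
  have hβn : 0 < β * n * (n - 5) := mul_pos (mul_pos hβ (by linarith)) (by linarith)
  obtain ⟨q, hq2, hqB, hqR, hqp, hmem⟩ := exists_pair_union_mem_of_lt_deg
    (h4.evenEdges (A := A)) hp₁.1 B R ((Nat.cast_lt (α := ℝ)).1 (by push_cast; linarith))
  refine ⟨q, ?_, hqR, hqp, hmem⟩
  by_contra hq
  exact hqB (mem_filter.2 ⟨mem_univ q, hq2, hq⟩)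

lemma div_sub_two_mul_le {β γ ε c : ℝ} (hβ : 0 < β) (hβ1 : β ≤ 1) (hγ : 0 < γ) (hγ1 : γ ≤ 1)
    (hε : ε ≤ γ ^ 5 * β / 8) (hc : c ≤ γ ^ 5 * β / 8) : c / (γ ^ 3 - 2 * ε) ≤ β / 6 := by
  have h53 : γ ^ 5 ≤ γ ^ 3 := pow_le_pow_of_le_one hγ.le hγ1 (by norm_num)
  have hγ3 := pow_pos hγ 3
  have hden : 3 / 4 * γ ^ 3 ≤ γ ^ 3 - 2 * ε := by nlinarith
  rw [div_le_iff₀ (by linarith)]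
  nlinarith

end EvenExtremal

end HamiltonTwoCycles

/-- **Proposition 5.10.** Suppose `1/n ≪ ε, c ≪ γ ≪ β ≪ β₂ ≪ β₁ ≪ 1`, `δ(H) ≥ n/2 - εn`
and `{A, Aᶜ}` is a `c`-even-extremal bipartition. Then (a) few pairs are not `γ`-good,
(b) few vertices are not `γ`-good, (c) few vertices are `(β₁,β₂)`-bad, and (d) every
`β`-medium pair forms an even edge with a `γ`-good pair avoiding any given small set. -/
theorem statement16 :
    ∃ β₁' : ℝ, 0 < β₁' ∧ ∀ β₁ : ℝ, 0 < β₁ → β₁ ≤ β₁' →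
    ∃ β₂' : ℝ, 0 < β₂' ∧ ∀ β₂ : ℝ, 0 < β₂ → β₂ ≤ β₂' →
    ∃ β' : ℝ, 0 < β' ∧ ∀ β : ℝ, 0 < β → β ≤ β' →
    ∃ γ₀ : ℝ, 0 < γ₀ ∧ ∀ γ : ℝ, 0 < γ → γ ≤ γ₀ →
    ∃ η : ℝ, 0 < η ∧ ∀ ε c : ℝ, 0 < ε → ε ≤ η → 0 < c → c ≤ η →
    ∃ n₀ : ℕ, ∀ n : ℕ, n₀ ≤ n →
    ∀ E : Finset (Finset (Fin n)), Is4Graph E →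
      MinCodegGE E ((n : ℝ)/2 - ε * n) →
      ∀ A : Finset (Fin n), EvenExtremalBip n E c A →
      ((Nat.card {p : Finset (Fin n) //
            p.card = 2 ∧ ¬ GoodPairFor n (evenEdges E A) γ p} : ℝ) ≤
          c / (γ^3 - 2*ε) * (n.choose 2 : ℝ)) ∧
      ((Nat.card {v : Fin n // ¬ GoodVertexFor n (evenEdges E A) γ v} : ℝ) ≤
          c / (γ^5 - 2*ε) * n) ∧
      ((Nat.card {v : Fin n // ¬ MediumVertexE n E A β₁ β₂ v} : ℝ) ≤
          c / ((1 - β₁) * (1/2 - β₂ - 2*ε)) * n) ∧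
      (∀ R : Finset (Fin n), (R.card : ℝ) ≤ β * n / 3 →
        ∀ p₁ : Finset (Fin n), MediumPairFor n (evenEdges E A) β p₁ →
          ∃ p₂ : Finset (Fin n), GoodPairFor n (evenEdges E A) γ p₂ ∧
            Disjoint p₂ R ∧ Disjoint p₂ p₁ ∧ p₁ ∪ p₂ ∈ evenEdges E A) := by
  refine ⟨1 / 2, by norm_num, fun β₁ _ hβ₁ => ⟨1 / 8, by norm_num, fun β₂ hβ₂ hβ₂8 =>
    ⟨β₂, hβ₂, fun β hβ hββ₂ => ⟨β, hβ, fun γ hγ hγβ => ?_⟩⟩⟩⟩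
  -- `η = γ⁵β/8` gives `2ε < γ⁵` and `c / (γ³ - 2ε) ≤ β/6`, the bound on bad pairs used in (d).
  refine ⟨γ ^ 5 * β / 8, by positivity, fun ε c hε hεη hc hcη =>
    ⟨⌈1 / ε⌉₊ + 6, fun n hn E h4 hδ A hA => ?_⟩⟩
  have hεn : 1 / 2 ≤ ε * n := by
    have h := (Nat.le_ceil (1 / ε)).trans (Nat.cast_le.2 ((Nat.le_add_right _ 6).trans hn))
    rw [div_le_iff₀ hε] at h
    linarith
  have hγ5β : γ ^ 5 * β ≤ 1 := mul_le_one₀ (pow_le_one₀ hγ.le (by linarith)) hβ.le (by linarith)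
  have hγ5 : 2 * ε < γ ^ 5 := by nlinarith [pow_pos hγ 5]
  have hγ3 : 2 * ε < γ ^ 3 := hγ5.trans_le (pow_le_pow_of_le_one hγ.le (by linarith) (by norm_num))
  have hpair := fun (p : Finset (Fin n)) (hp : p.card = 2) => deg_pair_ge h4 hδ hεn hp
  have ha := natCard_not_goodPair_le h4 hpair hA.2.2 hc.le (by omega) hγ3
  refine ⟨ha, natCard_not_goodVertex_le h4 (deg_singleton_ge h4 (by linarith) hpair) hA.2.2
    hc.le (by omega) hγ5, natCard_not_mediumVertex_le h4 hpair hA.2.2 hβ₁ (by linarith)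
    (by omega), fun R hR p₁ hp₁ => exists_goodPair_union_mem_evenEdges h4 hβ (by omega)
    (ha.trans (mul_le_mul_of_nonneg_right ?_ (Nat.cast_nonneg _))) R hR hp₁⟩
  exact div_sub_two_mul_le hβ (by linarith) hγ (by linarith) hεη hcη
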